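/- arXiv:2202.05068 — 5 statements merged into one kernel-verified Lean document; each statement's English description precedes it below -/
import Mathlib

section
/- For matrices A₁, B₁, A₂, B₂ of compatible dimensions, the Hadamard product of matrix-vector products satisfies (A₁B₁) ∘ (A₂B₂) = (A₁ • A₂)(B₁ ∗ B₂), where ∘ is the Hadamard product, • is the face-splitting (row-wise Kronecker) product, and ∗ is the column-wise Khatri–Rao product. -/
open Matrix

/-- Face-splitting (row-wise Kronecker) product of two matrices with the same row index. -/
def faceSplit {I J K : Type*} (A : Matrix I J ℝ) (B : Matrix I K ℝ) :
    Matrix I (J × K) ℝ := Matrix.of fun i jk => A i jk.1 * B i jk.2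

/-- Column-wise Khatri–Rao product of two matrices with the same column index. -/
def khatriRao {J K C : Type*} (A : Matrix J C ℝ) (B : Matrix K C ℝ) :
    Matrix (J × K) C ℝ := Matrix.of fun jk c => A jk.1 c * B jk.2 c

/-- Mixed product property: `(A₁B₁) ∘ (A₂B₂) = (A₁ • A₂)(B₁ ∗ B₂)`. -/
theorem mixed_product_property {I J K C : Type*} [Fintype J] [Fintype K]
    (A₁ : Matrix I J ℝ) (B₁ : Matrix J C ℝ) (A₂ : Matrix I K ℝ) (B₂ : Matrix K C ℝ) :
    Matrix.hadamard (A₁ * B₁) (A₂ * B₂) = faceSplit A₁ A₂ * khatriRao B₁ B₂ := by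
  ext i c
  simp only [Matrix.hadamard_apply, Matrix.mul_apply, faceSplit, khatriRao, Matrix.of_apply,
    Fintype.sum_prod_type, Finset.sum_mul_sum]
  apply Finset.sum_congr rfl; intro j _
  apply Finset.sum_congr rfl; intro k _
  ring
end

section
/- For matrices A_i ∈ ℝ^{m×d} and S_i ∈ ℝ^{m×m}, i = 1,…,k, the ℓ∞-operator norm satisfies ‖(A_k • S_k) ∏_{i=1}^{k-1} (I ⊗ (A_i • S_i))‖_∞ ≤ ∏_{i=1}^k ‖A_i‖_∞ ‖S_i‖_∞, where • is the face-splitting product and ⊗ is the Kronecker product with identity matrices of appropriate sizes. -/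
open Matrix Kronecker

/-- The `ℓ∞`-operator norm of a matrix: the maximum `ℓ₁`-norm of its rows. -/
noncomputable def linfOpNorm {I J : Type*} [Fintype I] [Fintype J] (A : Matrix I J ℝ) : ℝ :=
  ⨆ i, ∑ j, |A i j|

/-- Index type of the domain of the matrix `(A_n • S_n) ∏_{i=1}^{n-1} I ⊗ (A_i • S_i)`. -/
def Dom (d m : ℕ) : ℕ → Type
  | 0 => Fin m
  | n + 1 => Fin d × Dom d m n

instance DomFintype (d m : ℕ) : (n : ℕ) → Fintype (Dom d m n)
  | 0 => inferInstanceAs (Fintype (Fin m))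
  | n + 1 => letI := DomFintype d m n; inferInstanceAs (Fintype (Fin d × Dom d m n))

/-- The matrix `Φ_n = (A_n • S_n) ∏_{i=1}^{n-1} I ⊗ (A_i • S_i)` (with identity matrices of the
appropriate sizes), defined recursively via
`Φ_{n+1} = (A_{n+1} • S_{n+1}) (I_d ⊗ Φ_n)`, `Φ_0 = I`. -/
noncomputable def Phi {d m : ℕ} (A : ℕ → Matrix (Fin m) (Fin d) ℝ)
    (S : ℕ → Matrix (Fin m) (Fin m) ℝ) : (n : ℕ) → Matrix (Fin m) (Dom d m n) ℝ
  | 0 => (1 : Matrix (Fin m) (Fin m) ℝ)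
  | n + 1 => faceSplit (A (n + 1)) (S (n + 1)) *
      ((1 : Matrix (Fin d) (Fin d) ℝ) ⊗ₖ Phi A S n)

lemma linfOpNorm_nonneg {I J : Type*} [Fintype I] [Fintype J] (A : Matrix I J ℝ) :
    0 ≤ linfOpNorm A :=
  Real.iSup_nonneg fun _ => Finset.sum_nonneg fun _ _ => abs_nonneg _

lemma rowSum_le {I J : Type*} [Fintype I] [Fintype J] (A : Matrix I J ℝ) (i : I) :
    ∑ j, |A i j| ≤ linfOpNorm A :=
  le_ciSup (f := fun i => ∑ j, |A i j|) (Set.Finite.bddAbove (Set.finite_range _)) i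

lemma linfOpNorm_le {I J : Type*} [Fintype I] [Fintype J] {A : Matrix I J ℝ} {a : ℝ}
    (h0 : 0 ≤ a) (h : ∀ i, ∑ j, |A i j| ≤ a) : linfOpNorm A ≤ a :=
  Real.iSup_le h h0

lemma linfOpNorm_mul_le {I J K : Type*} [Fintype I] [Fintype J] [Fintype K]
    (A : Matrix I J ℝ) (B : Matrix J K ℝ) :
    linfOpNorm (A * B) ≤ linfOpNorm A * linfOpNorm B := by
  refine linfOpNorm_le (mul_nonneg (linfOpNorm_nonneg A) (linfOpNorm_nonneg B)) fun i => ?_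
  calc ∑ k, |(A * B) i k| ≤ ∑ k, ∑ j, |A i j * B j k| :=
        Finset.sum_le_sum fun k _ => Finset.abs_sum_le_sum_abs _ _
    _ = ∑ j, |A i j| * ∑ k, |B j k| := by
        rw [Finset.sum_comm]; simp [abs_mul, Finset.mul_sum]
    _ ≤ ∑ j, |A i j| * linfOpNorm B :=
        Finset.sum_le_sum fun j _ => mul_le_mul_of_nonneg_left (rowSum_le B j) (abs_nonneg _)
    _ = (∑ j, |A i j|) * linfOpNorm B := by rw [Finset.sum_mul]
    _ ≤ linfOpNorm A * linfOpNorm B :=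
        mul_le_mul_of_nonneg_right (rowSum_le A i) (linfOpNorm_nonneg B)

lemma linfOpNorm_faceSplit_le {I J K : Type*} [Fintype I] [Fintype J] [Fintype K]
    (A : Matrix I J ℝ) (B : Matrix I K ℝ) :
    linfOpNorm (faceSplit A B) ≤ linfOpNorm A * linfOpNorm B := by
  refine linfOpNorm_le (mul_nonneg (linfOpNorm_nonneg A) (linfOpNorm_nonneg B)) fun i => ?_
  have : ∑ jk : J × K, |faceSplit A B i jk| = (∑ j, |A i j|) * ∑ k, |B i k| := by
    rw [Finset.sum_mul_sum, ← Finset.sum_product']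
    simp [faceSplit, abs_mul]
  rw [this]
  exact mul_le_mul (rowSum_le A i) (rowSum_le B i)
    (Finset.sum_nonneg fun _ _ => abs_nonneg _) (linfOpNorm_nonneg A)

lemma linfOpNorm_one_kron_le {I J K : Type*} [Fintype I] [Fintype J] [Fintype K]
    [DecidableEq I] (M : Matrix J K ℝ) :
    linfOpNorm ((1 : Matrix I I ℝ) ⊗ₖ M) ≤ linfOpNorm M := by
  refine linfOpNorm_le (linfOpNorm_nonneg M) fun p => ?_
  have : ∑ q : I × K, |((1 : Matrix I I ℝ) ⊗ₖ M) p q| = ∑ k, |M p.2 k| := by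
    rw [Fintype.sum_prod_type]
    simp [Matrix.kroneckerMap_apply, Matrix.one_apply, abs_mul, apply_ite abs,
      Finset.sum_ite_eq, ite_mul, Finset.sum_ite_eq']
  rw [this]; exact rowSum_le M p.2

lemma linfOpNorm_one_le {I : Type*} [Fintype I] [DecidableEq I] :
    linfOpNorm (1 : Matrix I I ℝ) ≤ 1 := by
  refine linfOpNorm_le zero_le_one fun i => ?_
  simp [Matrix.one_apply, apply_ite abs, Finset.sum_ite_eq]

/-- `‖(A_k • S_k) ∏_{i=1}^{k-1} I ⊗ (A_i • S_i)‖_∞ ≤ ∏_{i=1}^k ‖A_i‖_∞ ‖S_i‖_∞`. -/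
theorem linfOpNorm_Phi_le {d m : ℕ} (A : ℕ → Matrix (Fin m) (Fin d) ℝ)
    (S : ℕ → Matrix (Fin m) (Fin m) ℝ) (k : ℕ) (hk : 1 ≤ k) :
    linfOpNorm (Phi A S k) ≤ ∏ i ∈ Finset.Icc 1 k, linfOpNorm (A i) * linfOpNorm (S i) := by
  clear hk
  induction k with
  | zero => simp [Phi]; exact linfOpNorm_one_le
  | succ n ih =>
    rw [Finset.prod_Icc_succ_top (Nat.succ_le_succ (Nat.zero_le n))]
    calc linfOpNorm (Phi A S (n + 1))
        ≤ linfOpNorm (faceSplit (A (n + 1)) (S (n + 1))) *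
            linfOpNorm ((1 : Matrix (Fin d) (Fin d) ℝ) ⊗ₖ Phi A S n) :=
          linfOpNorm_mul_le _ _
      _ ≤ (linfOpNorm (A (n + 1)) * linfOpNorm (S (n + 1))) *
            (∏ i ∈ Finset.Icc 1 n, linfOpNorm (A i) * linfOpNorm (S i)) := by
          refine mul_le_mul (linfOpNorm_faceSplit_le _ _)
            ((linfOpNorm_one_kron_le _).trans ih) (linfOpNorm_nonneg _)
            (mul_nonneg (linfOpNorm_nonneg _) (linfOpNorm_nonneg _))
      _ = _ := mul_comm _ _
end

section
/- Let f : ℝ^d → ℝ^o be the degree-k CCP polynomial network f(z) = C (U₁z ∘ U₂z ∘ ⋯ ∘ U_kz), where ∘ is the Hadamard product, C ∈ ℝ^{o×m} and U_i ∈ ℝ^{m×d}. Then the Lipschitz constant of f with respect to the ℓ_p norm, restricted to the set {z : ‖z‖_p ≤ 1}, satisfies Lip_p(f) ≤ k ‖C‖_p ∏_{i=1}^k ‖U_i‖_p, where ‖·‖_p denotes the induced ℓ_p-operator norm. -/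
open Matrix
open scoped ENNReal

/-- The `ℓ_p`-norm of a vector in `ℝ^n`. -/
noncomputable def pNorm (p : ℝ≥0∞) {n : Type*} [Fintype n] (x : n → ℝ) : ℝ :=
  ‖(WithLp.equiv p (n → ℝ)).symm x‖

/-- The induced `ℓ_p`-operator norm of a matrix. -/
noncomputable def pOpNorm (p : ℝ≥0∞) {a b : Type*} [Fintype a] [Fintype b]
    (A : Matrix a b ℝ) : ℝ :=
  ⨆ x : {x : b → ℝ // pNorm p x ≤ 1}, pNorm p (A.mulVec x.1)

section helpers

variable (p : ℝ≥0∞) {n : Type*} [Fintype n]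

lemma pNorm_nonneg (hp : 1 ≤ p) (x : n → ℝ) : 0 ≤ pNorm p x := by
  haveI : Fact (1 ≤ p) := ⟨hp⟩
  rw [pNorm]; exact norm_nonneg ((WithLp.equiv p (n → ℝ)).symm x)

lemma pNorm_zero (hp : 1 ≤ p) : pNorm p (0 : n → ℝ) = 0 := by
  haveI : Fact (1 ≤ p) := ⟨hp⟩
  rw [pNorm, WithLp.equiv_symm_apply, WithLp.toLp_zero]
  exact norm_zero

lemma pNorm_smul (hp : 1 ≤ p) (c : ℝ) (x : n → ℝ) :
    pNorm p (c • x) = |c| * pNorm p x := by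
  haveI : Fact (1 ≤ p) := ⟨hp⟩
  rw [pNorm, WithLp.equiv_symm_apply, WithLp.toLp_smul, norm_smul, Real.norm_eq_abs, pNorm]
  rfl

omit [Fintype n] in
lemma pNorm_apply (x : n → ℝ) (j : n) :
    ((WithLp.equiv p (n → ℝ)).symm x) j = x j := rfl

lemma pNorm_mono (hp : 1 ≤ p) {u v : n → ℝ} (h : ∀ j, |u j| ≤ |v j|) :
    pNorm p u ≤ pNorm p v := by
  rcases eq_or_ne p ∞ with rfl | hpt
  · rw [pNorm, pNorm, PiLp.norm_eq_ciSup, PiLp.norm_eq_ciSup]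
    exact ciSup_mono (Set.Finite.bddAbove (Set.finite_range _))
      fun j => by simpa [pNorm_apply, Real.norm_eq_abs] using h j
  · have ht : 0 < p.toReal :=
      ENNReal.toReal_pos (by positivity) hpt
    rw [pNorm, pNorm, PiLp.norm_eq_sum ht, PiLp.norm_eq_sum ht]
    apply Real.rpow_le_rpow (by positivity) _ (by positivity)
    apply Finset.sum_le_sum
    intro j _
    simp only [pNorm_apply, Real.norm_eq_abs]
    exact Real.rpow_le_rpow (abs_nonneg _) (h j) ht.le

lemma abs_le_pNorm (hp : 1 ≤ p) (x : n → ℝ) (j : n) :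
    |x j| ≤ pNorm p x := by
  rcases eq_or_ne p ∞ with rfl | hpt
  · rw [pNorm, PiLp.norm_eq_ciSup]
    have := le_ciSup (f := fun i => ‖((WithLp.equiv ∞ (n → ℝ)).symm x) i‖)
      (Set.Finite.bddAbove (Set.finite_range _)) j
    simpa [pNorm_apply, Real.norm_eq_abs] using this
  · have ht : 0 < p.toReal :=
      ENNReal.toReal_pos (by positivity) hpt
    rw [pNorm, PiLp.norm_eq_sum ht]
    have h1 : |x j| = ((|x j| ^ p.toReal) ^ (1 / p.toReal)) := by
      rw [one_div, Real.rpow_rpow_inv (abs_nonneg _) ht.ne']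
    rw [h1]
    apply Real.rpow_le_rpow (by positivity) _ (by positivity)
    have := Finset.single_le_sum
      (f := fun i => ‖((WithLp.equiv p (n → ℝ)).symm x) i‖ ^ p.toReal)
      (fun i _ => by positivity) (Finset.mem_univ j)
    simpa [pNorm_apply, Real.norm_eq_abs] using this

lemma pNorm_sum_le {ι : Type*} (hp : 1 ≤ p) (s : Finset ι) (f : ι → (n → ℝ)) :
    pNorm p (∑ i ∈ s, f i) ≤ ∑ i ∈ s, pNorm p (f i) := by
  haveI : Fact (1 ≤ p) := ⟨hp⟩
  have key : ∀ x : n → ℝ,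
      pNorm p x = ‖(WithLp.linearEquiv p ℝ (n → ℝ)).symm x‖ := fun x => rfl
  have h2 : (WithLp.linearEquiv p ℝ (n → ℝ)).symm (∑ i ∈ s, f i)
      = ∑ i ∈ s, (WithLp.linearEquiv p ℝ (n → ℝ)).symm (f i) := map_sum ((WithLp.linearEquiv p ℝ (n → ℝ)).symm.toLinearMap) f s
  rw [key, h2]
  refine le_trans (norm_sum_le _ _) (le_of_eq ?_)
  exact Finset.sum_congr rfl fun i _ => (key (f i)).symm

end helpers

section opnorm

variable (p : ℝ≥0∞) {a b : Type*} [Fintype a] [Fintype b]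

lemma pOpNorm_spec (hp : 1 ≤ p) (A : Matrix a b ℝ) :
    0 ≤ pOpNorm p A ∧ ∀ x : b → ℝ, pNorm p (A.mulVec x) ≤ pOpNorm p A * pNorm p x := by
  haveI : Fact (1 ≤ p) := ⟨hp⟩
  haveI : Nonempty {x : b → ℝ // pNorm p x ≤ 1} :=
    ⟨⟨0, by rw [pNorm_zero p hp]; exact zero_le_one⟩⟩
  -- the matrix as a continuous linear map between PiLp spaces
  let L : WithLp p (b → ℝ) →ₗ[ℝ] WithLp p (a → ℝ) :=
    (WithLp.linearEquiv p ℝ (a → ℝ)).symm.toLinearMap ∘ₗ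
      A.mulVecLin ∘ₗ (WithLp.linearEquiv p ℝ (b → ℝ)).toLinearMap
  let L' := LinearMap.toContinuousLinearMap L
  have hL : ∀ x : b → ℝ,
      pNorm p (A.mulVec x) = ‖L' ((WithLp.equiv p (b → ℝ)).symm x)‖ := fun x => rfl
  have hbdd : BddAbove (Set.range fun s : {x : b → ℝ // pNorm p x ≤ 1} =>
      pNorm p (A.mulVec s.1)) := by
    refine ⟨‖L'‖, ?_⟩
    rintro _ ⟨s, rfl⟩
    calc pNorm p (A.mulVec s.1) = ‖L' ((WithLp.equiv p (b → ℝ)).symm s.1)‖ := hL s.1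
      _ ≤ ‖L'‖ * ‖(WithLp.equiv p (b → ℝ)).symm s.1‖ := L'.le_opNorm _
      _ ≤ ‖L'‖ * 1 := by
          exact mul_le_mul_of_nonneg_left s.2 (norm_nonneg _)
      _ = ‖L'‖ := mul_one _
  have hle : ∀ s : {x : b → ℝ // pNorm p x ≤ 1},
      pNorm p (A.mulVec s.1) ≤ pOpNorm p A := fun s => le_ciSup hbdd s
  have h0 : 0 ≤ pOpNorm p A := by
    refine le_trans (pNorm_nonneg p hp (A.mulVec 0)) (hle ⟨0, ?_⟩)
    rw [pNorm_zero p hp]; exact zero_le_one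
  refine ⟨h0, fun x => ?_⟩
  rcases eq_or_ne (pNorm p x) 0 with hx | hx
  · have : (WithLp.equiv p (b → ℝ)).symm x = 0 := norm_eq_zero.mp hx
    have hx0 : x = 0 := by
      have := congrArg (WithLp.equiv p (b → ℝ)) this
      simpa using this
    simp [hx0, Matrix.mulVec_zero, pNorm_zero p hp, hx]
  · have hc : 0 < pNorm p x := lt_of_le_of_ne (pNorm_nonneg p hp x) (Ne.symm hx)
    set c := pNorm p x with hcdef
    have hy : pNorm p (c⁻¹ • x) = 1 := by
      rw [pNorm_smul p hp, abs_of_nonneg (by positivity)]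
      field_simp
      exact hcdef.symm
    have := hle ⟨c⁻¹ • x, hy.le⟩
    rw [Matrix.mulVec_smul, pNorm_smul p hp,
      abs_of_nonneg (by positivity)] at this
    have h2 := mul_le_mul_of_nonneg_right this hc.le
    calc pNorm p (A.mulVec x) = c⁻¹ * pNorm p (A.mulVec x) * c := by
          field_simp
      _ ≤ pOpNorm p A * c := h2

end opnorm

/-- The `ℓ_p`-Lipschitz constant of the degree-`k` CCP network
`f(z) = C (U₁z ∘ ⋯ ∘ U_kz)` restricted to the unit `ℓ_p`-ball is at most
`k ‖C‖_p ∏_{i=1}^k ‖U_i‖_p`. -/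
theorem ccp_lipschitz_p (p : ℝ≥0∞) (hp : 1 ≤ p) {d m o k : ℕ}
    (C : Matrix (Fin o) (Fin m) ℝ) (U : Fin k → Matrix (Fin m) (Fin d) ℝ) :
    ∀ z₁ z₂ : Fin d → ℝ, pNorm p z₁ ≤ 1 → pNorm p z₂ ≤ 1 →
      pNorm p (C.mulVec (fun j => ∏ i, (U i).mulVec z₁ j) -
               C.mulVec (fun j => ∏ i, (U i).mulVec z₂ j)) ≤
        (k : ℝ) * pOpNorm p C * (∏ i, pOpNorm p (U i)) * pNorm p (z₁ - z₂) := by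
  intro z₁ z₂ hz₁ hz₂
  haveI : Fact (1 ≤ p) := ⟨hp⟩
  obtain ⟨hC0, hC⟩ := pOpNorm_spec p hp C
  have hU0 : ∀ i, 0 ≤ pOpNorm p (U i) := fun i => (pOpNorm_spec p hp (U i)).1
  have hU : ∀ i (x : Fin d → ℝ), pNorm p ((U i).mulVec x) ≤ pOpNorm p (U i) * pNorm p x :=
    fun i => (pOpNorm_spec p hp (U i)).2
  set a : Fin k → Fin m → ℝ := fun i => (U i).mulVec z₁ with ha
  set b : Fin k → Fin m → ℝ := fun i => (U i).mulVec z₂ with hb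
  set w : Fin d → ℝ := z₁ - z₂ with hw
  -- entrywise bounds on a and b
  have hab : ∀ (i : Fin k) (j : Fin m),
      |a i j| ≤ pOpNorm p (U i) ∧ |b i j| ≤ pOpNorm p (U i) := by
    intro i j
    constructor
    · calc |a i j| ≤ pNorm p (a i) := abs_le_pNorm p hp _ j
        _ ≤ pOpNorm p (U i) * pNorm p z₁ := hU i z₁
        _ ≤ pOpNorm p (U i) * 1 := mul_le_mul_of_nonneg_left hz₁ (hU0 i)
        _ = pOpNorm p (U i) := mul_one _
    · calc |b i j| ≤ pNorm p (b i) := abs_le_pNorm p hp _ j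
        _ ≤ pOpNorm p (U i) * pNorm p z₂ := hU i z₂
        _ ≤ pOpNorm p (U i) * 1 := mul_le_mul_of_nonneg_left hz₂ (hU0 i)
        _ = pOpNorm p (U i) := mul_one _
  -- interpolating vectors
  set G : ℕ → Fin m → ℝ :=
    fun i j => ∏ l : Fin k, (if (l : ℕ) < i then a l j else b l j) with hG
  have hGk : G k = fun j => ∏ i, a i j := by
    funext j
    show (∏ l : Fin k, (if (l : ℕ) < k then a l j else b l j)) = _
    exact Finset.prod_congr rfl fun l _ => by simp [l.isLt]
  have hG0 : G 0 = fun j => ∏ i, b i j := by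
    funext j
    show (∏ l : Fin k, (if (l : ℕ) < 0 then a l j else b l j)) = _
    exact Finset.prod_congr rfl fun l _ => by simp
  have htel : (fun j => ∏ i, a i j) - (fun j => ∏ i, b i j)
      = ∑ i ∈ Finset.range k, (G (i + 1) - G i) := by
    rw [Finset.sum_range_sub G, hGk, hG0]
  -- per-step bound
  have hstep : ∀ i ∈ Finset.range k,
      pNorm p (G (i + 1) - G i) ≤ (∏ l, pOpNorm p (U l)) * pNorm p w := by
    intro i hi
    rw [Finset.mem_range] at hi
    set i' : Fin k := ⟨i, hi⟩ with hi'
    set Q : Fin m → ℝ :=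
      fun j => ∏ l ∈ Finset.univ.erase i', (if (l : ℕ) < i then a l j else b l j) with hQ
    set M : ℝ := ∏ l ∈ Finset.univ.erase i', pOpNorm p (U l) with hM
    have hM0 : 0 ≤ M := Finset.prod_nonneg fun l _ => hU0 l
    have hQle : ∀ j, |Q j| ≤ M := by
      intro j
      rw [hQ, hM, Finset.abs_prod]
      apply Finset.prod_le_prod (fun l _ => abs_nonneg _)
      intro l _
      by_cases h : (l : ℕ) < i
      · simpa [h] using (hab l j).1
      · simpa [h] using (hab l j).2
    have hdiff : ∀ j, (G (i + 1) - G i) j = Q j * ((U i').mulVec w j) := by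
      intro j
      have hmw : (U i').mulVec w j = a i' j - b i' j := by
        rw [hw, Matrix.mulVec_sub]; rfl
      have h1 : G (i + 1) j = a i' j * Q j := by
        show (∏ l : Fin k, (if (l : ℕ) < i + 1 then a l j else b l j)) = _
        rw [← Finset.mul_prod_erase Finset.univ
          (fun l : Fin k => (if (l : ℕ) < i + 1 then a l j else b l j))
          (Finset.mem_univ i'), hQ]
        congr 1
        · simp [hi']
        · apply Finset.prod_congr rfl
          intro l hl
          have hne : (l : ℕ) ≠ i := by
            intro h
            exact (Finset.mem_erase.mp hl).1 (Fin.ext (h.trans (by simp [hi'])))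
          have hiff : ((l : ℕ) < i + 1) ↔ ((l : ℕ) < i) := by omega
          simp [hiff]
      have h2 : G i j = b i' j * Q j := by
        show (∏ l : Fin k, (if (l : ℕ) < i then a l j else b l j)) = _
        rw [← Finset.mul_prod_erase Finset.univ
          (fun l : Fin k => (if (l : ℕ) < i then a l j else b l j))
          (Finset.mem_univ i'), hQ]
        congr 1
        simp [hi']
      simp only [Pi.sub_apply, h1, h2, hmw]
      ring
    have hmono : pNorm p (G (i + 1) - G i) ≤ pNorm p (M • (U i').mulVec w) := by
      apply pNorm_mono p hp
      intro j
      rw [hdiff j]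
      simp only [Pi.smul_apply, smul_eq_mul, abs_mul, abs_of_nonneg hM0]
      exact mul_le_mul_of_nonneg_right (hQle j) (abs_nonneg _)
    calc pNorm p (G (i + 1) - G i) ≤ pNorm p (M • (U i').mulVec w) := hmono
      _ = M * pNorm p ((U i').mulVec w) := by
          rw [pNorm_smul p hp, abs_of_nonneg hM0]
      _ ≤ M * (pOpNorm p (U i') * pNorm p w) :=
          mul_le_mul_of_nonneg_left (hU i' w) hM0
      _ = (∏ l, pOpNorm p (U l)) * pNorm p w := by
          rw [← mul_assoc, mul_comm M, hM,
            Finset.mul_prod_erase Finset.univ (fun l => pOpNorm p (U l))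
              (Finset.mem_univ i')]
  -- assemble
  have hmain : C.mulVec (fun j => ∏ i, a i j) - C.mulVec (fun j => ∏ i, b i j)
      = C.mulVec (∑ i ∈ Finset.range k, (G (i + 1) - G i)) := by
    rw [← Matrix.mulVec_sub, ← htel]
  calc pNorm p (C.mulVec (fun j => ∏ i, a i j) - C.mulVec (fun j => ∏ i, b i j))
      = pNorm p (C.mulVec (∑ i ∈ Finset.range k, (G (i + 1) - G i))) := by rw [hmain]
    _ ≤ pOpNorm p C * pNorm p (∑ i ∈ Finset.range k, (G (i + 1) - G i)) := hC _
    _ ≤ pOpNorm p C * ∑ i ∈ Finset.range k, pNorm p (G (i + 1) - G i) :=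
        mul_le_mul_of_nonneg_left (pNorm_sum_le p hp _ _) hC0
    _ ≤ pOpNorm p C * ∑ _i ∈ Finset.range k, (∏ l, pOpNorm p (U l)) * pNorm p w :=
        mul_le_mul_of_nonneg_left (Finset.sum_le_sum hstep) hC0
    _ = (k : ℝ) * pOpNorm p C * (∏ i, pOpNorm p (U i)) * pNorm p w := by
        rw [Finset.sum_const, Finset.card_range]
        ring
end

section
/- (Multi-channel 2D convolution operator norm) Let K ∈ ℝ^{h×h×r×o} be a multi-channel convolutional kernel with h odd, h ≤ min(n,m), acting on inputs A ∈ ℝ^{n×m×r} with zero padding to produce outputs B = K ⋆ A ∈ ℝ^{n×m×o}. Let U ∈ ℝ^{nmo×nmr} be the matrix with vec(B) = U vec(A), and let M(K) ∈ ℝ^{o×h²r} be the matricization of K where each row collects the parameters of one output channel. Then ‖U‖_∞ = ‖M(K)‖_∞, i.e., the ℓ∞-operator norm of the convolution matrix equals the maximum over output channels of the sum of absolute values of all kernel entries feeding that channel. -/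
open Matrix

private lemma sum_Ico_int_eq {h : ℕ} (f : ℤ → ℝ) :
    ∑ a ∈ Finset.Ico (0:ℤ) h, f a = ∑ i ∈ Finset.range h, f (i : ℤ) := by
  rw [← Finset.sum_image (f := f) (g := fun i : ℕ => (i : ℤ))
    (by intro x _ y _ hxy; simpa using hxy)]
  congr 1
  ext a
  simp only [Finset.mem_image, Finset.mem_range, Finset.mem_Ico]
  constructor
  · rintro ⟨ha0, hah⟩
    exact ⟨a.toNat, by omega, by omega⟩
  · rintro ⟨i, hi, rfl⟩
    exact ⟨by positivity, by exact_mod_cast hi⟩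

private lemma sum_shift_le {h n : ℕ} (f : ℤ → ℝ) (hnn : ∀ a, 0 ≤ f a)
    (hf : ∀ a : ℤ, a < 0 ∨ (h:ℤ) ≤ a → f a = 0) (t : ℤ) :
    ∑ i ∈ Finset.range n, f ((i : ℤ) + t) ≤ ∑ i ∈ Finset.range h, f (i : ℤ) := by
  rw [← Finset.sum_image (f := f) (g := fun i : ℕ => (i : ℤ) + t)
    (by intro x _ y _ hxy; simp only at hxy; omega)]
  rw [← sum_Ico_int_eq]
  rw [← Finset.sum_subset (Finset.inter_subset_left
      (s₁ := ((Finset.range n).image fun i : ℕ => (i:ℤ) + t)) (s₂ := Finset.Ico (0:ℤ) h))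
    (by intro a ha hna
        apply hf
        simp only [Finset.mem_inter, Finset.mem_Ico, not_and, not_lt, ha, true_and] at hna
        by_cases h0 : (0:ℤ) ≤ a
        · exact Or.inr (hna h0)
        · exact Or.inl (by omega))]
  apply Finset.sum_le_sum_of_subset_of_nonneg
  · intro a ha; exact (Finset.mem_inter.mp ha).2
  · intro a _ _; exact hnn a

private lemma sum_trunc {h n : ℕ} (hn : h ≤ n) (f : ℤ → ℝ)
    (hf : ∀ a : ℤ, a < 0 ∨ (h:ℤ) ≤ a → f a = 0) :
    ∑ i ∈ Finset.range n, f (i : ℤ) = ∑ i ∈ Finset.range h, f (i : ℤ) := by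
  refine (Finset.sum_subset (Finset.range_subset_range.mpr hn) ?_).symm
  intro i _ hih
  simp only [Finset.mem_range, not_lt] at hih
  exact hf _ (Or.inr (by exact_mod_cast hih))

/-- Multi-channel 2-D convolution operator norm: let `K` be an `h × h × r × o` kernel
(`K s l` is the `h × h` kernel from input channel `s` to output channel `l`, supported on
`{0,…,h-1}²`), with `h` odd and `h ≤ min(n,m)`, and let `U` be the matrix of the
zero-padded multi-channel convolution, whose `(l,s)` block is the single-channel
convolution matrix with kernel `K s l`. Let `M(K)` be the `o × h²r` matricization of `K`
where each row collects the parameters of one output channel. Then `‖U‖_∞ = ‖M(K)‖_∞`. -/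
theorem conv2d_multichannel_linfOpNorm {n m h r o : ℕ}
    (hodd : Odd h) (hhn : h ≤ n) (hhm : h ≤ m)
    (K : Fin r → Fin o → ℤ → ℤ → ℝ)
    (hsupp : ∀ (s : Fin r) (l : Fin o) (a b : ℤ),
      a < 0 ∨ (h : ℤ) ≤ a ∨ b < 0 ∨ (h : ℤ) ≤ b → K s l a b = 0)
    (U : Matrix ((Fin n × Fin m) × Fin o) ((Fin n × Fin m) × Fin r) ℝ)
    (hU : ∀ (p q : Fin n × Fin m) (l : Fin o) (s : Fin r),
      U (p, l) (q, s) = K s l ((q.1 : ℤ) - (p.1 : ℤ) + ((h : ℤ) - 1) / 2)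
                              ((q.2 : ℤ) - (p.2 : ℤ) + ((h : ℤ) - 1) / 2)) :
    linfOpNorm U =
      linfOpNorm (Matrix.of fun (l : Fin o) (x : Fin r × Fin h × Fin h) =>
        K x.1 l ((x.2.1 : ℕ) : ℤ) ((x.2.2 : ℕ) : ℤ)) := by
  classical
  obtain ⟨k, hk⟩ := hodd
  have h1 : 1 ≤ h := by omega
  set c : ℤ := ((h : ℤ) - 1) / 2 with hc
  set T : Fin o → ℝ := fun l => ∑ s : Fin r, ∑ i ∈ Finset.range h, ∑ j ∈ Finset.range h,
    |K s l (i : ℤ) (j : ℤ)| with hT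
  -- row sum formula
  have row : ∀ (p : Fin n × Fin m) (l : Fin o),
      ∑ j, |U (p, l) j| = ∑ s : Fin r, ∑ q1 ∈ Finset.range n, ∑ q2 ∈ Finset.range m,
        |K s l ((q1 : ℤ) + (c - (p.1 : ℤ))) ((q2 : ℤ) + (c - (p.2 : ℤ)))| := by
    intro p l
    rw [Fintype.sum_prod_type, Finset.sum_comm]
    refine Finset.sum_congr rfl fun s _ => ?_
    rw [Fintype.sum_prod_type,
      ← Fin.sum_univ_eq_sum_range (fun q1 : ℕ => ∑ q2 ∈ Finset.range m,
        |K s l ((q1 : ℤ) + (c - (p.1 : ℤ))) ((q2 : ℤ) + (c - (p.2 : ℤ)))|) n]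
    refine Finset.sum_congr rfl fun q1 _ => ?_
    rw [← Fin.sum_univ_eq_sum_range (fun q2 : ℕ =>
        |K s l ((q1 : ℤ) + (c - (p.1 : ℤ))) ((q2 : ℤ) + (c - (p.2 : ℤ)))|) m]
    refine Finset.sum_congr rfl fun q2 _ => ?_
    rw [hU]
    congr 2 <;> ring
  -- upper bound for every row
  have upper : ∀ (p : Fin n × Fin m) (l : Fin o), ∑ j, |U (p, l) j| ≤ T l := by
    intro p l
    rw [row p l]
    refine Finset.sum_le_sum fun s _ => ?_
    calc ∑ q1 ∈ Finset.range n, ∑ q2 ∈ Finset.range m,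
          |K s l ((q1 : ℤ) + (c - (p.1 : ℤ))) ((q2 : ℤ) + (c - (p.2 : ℤ)))|
        ≤ ∑ q1 ∈ Finset.range n, ∑ j ∈ Finset.range h,
          |K s l ((q1 : ℤ) + (c - (p.1 : ℤ))) (j : ℤ)| := by
          refine Finset.sum_le_sum fun q1 _ => ?_
          exact sum_shift_le (f := fun b => |K s l ((q1 : ℤ) + (c - (p.1 : ℤ))) b|)
            (fun _ => abs_nonneg _)
            (fun b hb => abs_eq_zero.mpr (hsupp s l _ b (by tauto))) _
      _ = ∑ j ∈ Finset.range h, ∑ q1 ∈ Finset.range n,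
          |K s l ((q1 : ℤ) + (c - (p.1 : ℤ))) (j : ℤ)| := Finset.sum_comm
      _ ≤ ∑ j ∈ Finset.range h, ∑ i ∈ Finset.range h, |K s l (i : ℤ) (j : ℤ)| := by
          refine Finset.sum_le_sum fun j _ => ?_
          exact sum_shift_le (f := fun a => |K s l a (j : ℤ)|)
            (fun _ => abs_nonneg _)
            (fun a ha => abs_eq_zero.mpr (hsupp s l a _ (by tauto))) _
      _ = ∑ i ∈ Finset.range h, ∑ j ∈ Finset.range h, |K s l (i : ℤ) (j : ℤ)| :=
          Finset.sum_comm
  -- center row attains T l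
  have hkn : k < n := by omega
  have hkm : k < m := by omega
  set p₀ : Fin n × Fin m := (⟨k, hkn⟩, ⟨k, hkm⟩) with hp₀
  have hc0 : c - ((p₀.1 : ℕ) : ℤ) = 0 := by
    simp only [hp₀, hc]
    omega
  have hc0' : c - ((p₀.2 : ℕ) : ℤ) = 0 := by
    simp only [hp₀, hc]
    omega
  have center : ∀ l : Fin o, ∑ j, |U (p₀, l) j| = T l := by
    intro l
    rw [row p₀ l]
    refine Finset.sum_congr rfl fun s _ => ?_
    simp only [hc0, hc0', add_zero]
    rw [sum_trunc hhn (fun a => ∑ q2 ∈ Finset.range m, |K s l a (q2 : ℤ)|)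
      (fun a ha => Finset.sum_eq_zero fun q2 _ => abs_eq_zero.mpr (hsupp s l a _ (by tauto)))]
    refine Finset.sum_congr rfl fun i _ => ?_
    exact sum_trunc hhm (fun b => |K s l (i : ℤ) b|)
      (fun b hb => abs_eq_zero.mpr (hsupp s l _ b (by tauto)))
  -- matricization row sums equal T
  have matRow : ∀ l : Fin o,
      (∑ x : Fin r × Fin h × Fin h, |K x.1 l ((x.2.1 : ℕ) : ℤ) ((x.2.2 : ℕ) : ℤ)|) = T l := by
    intro l
    rw [Fintype.sum_prod_type]
    refine Finset.sum_congr rfl fun s _ => ?_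
    rw [Fintype.sum_prod_type,
      ← Fin.sum_univ_eq_sum_range (fun i : ℕ => ∑ j ∈ Finset.range h,
        |K s l (i : ℤ) (j : ℤ)|) h]
    refine Finset.sum_congr rfl fun i _ => ?_
    exact (Fin.sum_univ_eq_sum_range (fun j : ℕ => |K s l (i : ℤ) (j : ℤ)|) h)
  -- conclude
  unfold linfOpNorm
  rcases Nat.eq_zero_or_pos o with ho | ho
  · haveI : IsEmpty (Fin o) := ⟨fun l => absurd l.2 (by omega)⟩
    rw [Real.iSup_of_isEmpty, Real.iSup_of_isEmpty]
  · haveI : Nonempty (Fin o) := ⟨⟨0, ho⟩⟩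
    haveI : Nonempty (Fin n) := ⟨⟨0, by omega⟩⟩
    haveI : Nonempty (Fin m) := ⟨⟨0, by omega⟩⟩
    apply le_antisymm
    · refine ciSup_le ?_
      rintro ⟨p, l⟩
      calc ∑ j, |U (p, l) j| ≤ T l := upper p l
        _ = ∑ x : Fin r × Fin h × Fin h,
            |Matrix.of (fun (l : Fin o) (x : Fin r × Fin h × Fin h) =>
              K x.1 l ((x.2.1 : ℕ) : ℤ) ((x.2.2 : ℕ) : ℤ)) l x| := by
            simp only [Matrix.of_apply]; exact (matRow l).symm
        _ ≤ _ := le_ciSup (f := fun i : Fin o => ∑ j : Fin r × Fin h × Fin h,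
            |Matrix.of (fun (l : Fin o) (x : Fin r × Fin h × Fin h) =>
              K x.1 l ((x.2.1 : ℕ) : ℤ) ((x.2.2 : ℕ) : ℤ)) i j|)
            (Finite.bddAbove_range _) l
    · refine ciSup_le fun l => ?_
      calc ∑ x, |Matrix.of (fun (l : Fin o) (x : Fin r × Fin h × Fin h) =>
              K x.1 l ((x.2.1 : ℕ) : ℤ) ((x.2.2 : ℕ) : ℤ)) l x|
          = T l := by simp only [Matrix.of_apply]; exact matRow l
        _ = ∑ j, |U (p₀, l) j| := (center l).symm
        _ ≤ _ := le_ciSup (f := fun i : (Fin n × Fin m) × Fin o => ∑ j, |U i j|)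
            (Finite.bddAbove_range _) (p₀, l)
end

section
/- (CCP reparametrization) Let f : ℝ^δ → ℝ^o be defined recursively by y₁ = V₁ζ, y_n = (V_nζ) ∘ y_{n-1} + y_{n-1} for 2 ≤ n ≤ k, and f(ζ) = Qy_k + β. Define z = (ζ, 1) ∈ ℝ^{δ+1}, C = [Q, β], U₁ = [[V₁, 0],[0ᵀ, 1]] and U_i = [[V_i, 1],[0ᵀ, 1]] for i > 1 (block matrices of size (μ+1)×(δ+1)). Then f(ζ) = C (U₁z ∘ U₂z ∘ ⋯ ∘ U_kz), where ∘ is the Hadamard product. -/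
open Matrix

/-- The augmented weight matrices of the CCP reparametrization:
`U₁ = [[V₁, 0],[0ᵀ, 1]]` and `U_i = [[V_i, 1],[0ᵀ, 1]]` for `i > 1`. -/
noncomputable def ccpU {δ μ' : ℕ} (V : ℕ → Matrix (Fin μ') (Fin δ) ℝ) (i : ℕ) :
    Matrix (Fin μ' ⊕ Unit) (Fin δ ⊕ Unit) ℝ :=
  if i = 1 then Matrix.fromBlocks (V 1) 0 0 1
  else Matrix.fromBlocks (V i) (Matrix.of fun _ _ => (1 : ℝ)) 0 1

/-- CCP reparametrization: if `y₁ = V₁ζ`, `y_n = (V_nζ) ∘ y_{n-1} + y_{n-1}` and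
`f(ζ) = Qy_k + β`, then with `z = (ζ, 1)`, `C = [Q, β]` and the augmented matrices `U_i`,
one has `f(ζ) = C (U₁z ∘ U₂z ∘ ⋯ ∘ U_kz)`. -/
theorem ccp_reparametrization {δ μ' o : ℕ} (k : ℕ) (hk : 1 ≤ k)
    (V : ℕ → Matrix (Fin μ') (Fin δ) ℝ) (Q : Matrix (Fin o) (Fin μ') ℝ)
    (β : Fin o → ℝ) (ζ : Fin δ → ℝ) (y : ℕ → Fin μ' → ℝ)
    (hy1 : y 1 = (V 1).mulVec ζ)
    (hyn : ∀ n, 1 ≤ n → y (n + 1) = fun j => (V (n + 1)).mulVec ζ j * y n j + y n j) :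
    Q.mulVec (y k) + β =
      (Matrix.of fun (i : Fin o) => Sum.elim (Q i) (fun _ : Unit => β i)).mulVec
        (fun jj => ∏ i ∈ Finset.Icc 1 k,
          (ccpU V i).mulVec (Sum.elim ζ (fun _ : Unit => (1 : ℝ))) jj) := by
  set z : Fin δ ⊕ Unit → ℝ := Sum.elim ζ (fun _ : Unit => (1 : ℝ)) with hz
  have key : ∀ m, 1 ≤ m → (fun jj => ∏ i ∈ Finset.Icc 1 m, (ccpU V i).mulVec z jj)
      = Sum.elim (y m) (fun _ : Unit => (1 : ℝ)) := by
    intro m hm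
    induction m, hm using Nat.le_induction with
    | base =>
        funext jj
        rw [Finset.Icc_self, Finset.prod_singleton]
        have : (ccpU V 1).mulVec z = Sum.elim (y 1) (fun _ : Unit => (1 : ℝ)) := by
          rw [ccpU, if_pos rfl, fromBlocks_mulVec, hy1]
          ext (j | u) <;> simp [hz, mulVec, dotProduct]
        rw [this]
    | succ n hn ih =>
        funext jj
        rw [show Finset.Icc 1 (n + 1) = insert (n + 1) (Finset.Icc 1 n) by
              ext x; simp [Finset.mem_Icc]; omega,
            Finset.prod_insert (by simp)]
        have hprev : ∏ i ∈ Finset.Icc 1 n, (ccpU V i).mulVec z jj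
            = Sum.elim (y n) (fun _ : Unit => (1 : ℝ)) jj := congrFun ih jj
        rw [hprev]
        have hU : (ccpU V (n + 1)).mulVec z
            = Sum.elim (fun j => (V (n+1)).mulVec ζ j + 1) (fun _ : Unit => (1 : ℝ)) := by
          rw [ccpU, if_neg (by omega), fromBlocks_mulVec]
          ext (j | u) <;> simp [hz, mulVec, dotProduct]
        rw [hU, hyn n hn]
        cases jj with
        | inl j => simp; ring
        | inr u => simp
  rw [key k hk]
  funext i
  simp [mulVec, dotProduct, Fintype.sum_sum_type]
end
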